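/- Let D* be a minimal strongly connected digraph and v a linear vertex with unique in-neighbor u and unique out-neighbor w, where u ≠ w. If there exists a directed path from u to w in D* distinct from the path u, v, w, then the digraph D* − v (obtained by deleting v and its incident arcs) is minimal strongly connected. -/

import Mathlib

/-- Reachability in a digraph given by its arc set `A`. -/
def Reach {α : Type*} (A : Finset (α × α)) (u v : α) : Prop :=
  Relation.ReflTransGen (fun a b => (a, b) ∈ A) u v

/-- A digraph with vertex set `V` and arc set `A` is strongly connected if
every vertex reaches every other vertex by a directed path. -/
def StrongConn {α : Type*} (V : Finset α) (A : Finset (α × α)) : Prop :=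
  ∀ u ∈ V, ∀ v ∈ V, Reach A u v

/-- Minimal strongly connected: strongly connected and removing any arc
destroys strong connectivity. -/
def MSC {α : Type*} [DecidableEq α] (V : Finset α) (A : Finset (α × α)) : Prop :=
  StrongConn V A ∧ ∀ a ∈ A, ¬ StrongConn V (A.erase a)

/-- `l` is a directed (simple) path from `u` to `v` in the digraph with arc set `A`. -/
def IsPath {α : Type*} (A : Finset (α × α)) (u v : α) (l : List α) : Prop :=
  l.Chain' (fun a b => (a, b) ∈ A) ∧ l.head? = some u ∧ l.getLast? = some v ∧ l.Nodup

/-- `(u,v)` is a transitive arc: it is an arc and there is a directed path from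
`u` to `v` distinct from the single arc `(u,v)`. -/
def TransArc {α : Type*} (A : Finset (α × α)) (u v : α) : Prop :=
  (u, v) ∈ A ∧ ∃ l, IsPath A u v l ∧ l ≠ [u, v]

/-- `l` (a list of distinct vertices, of length ≥ 2) is a directed cycle:
consecutive vertices are joined by arcs, and there is an arc from the last
vertex back to the first. -/
def IsCycle {α : Type*} (A : Finset (α × α)) (l : List α) : Prop :=
  ∃ h : l ≠ [], l.Nodup ∧ 2 ≤ l.length ∧
    List.Chain (fun a b => (a, b) ∈ A) (l.getLast h) l

/-- Well-formedness: nonempty vertex set, arcs join vertices of `V`, no loops. -/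
def GoodDigraph {α : Type*} (V : Finset α) (A : Finset (α × α)) : Prop :=
  V.Nonempty ∧ ∀ a ∈ A, a.1 ∈ V ∧ a.2 ∈ V ∧ a.1 ≠ a.2

/-- Outdegree of a vertex. -/
def outdeg {α : Type*} [DecidableEq α] (A : Finset (α × α)) (v : α) : ℕ :=
  (A.filter (fun a => a.1 = v)).card

/-- Indegree of a vertex. -/
def indeg {α : Type*} [DecidableEq α] (A : Finset (α × α)) (v : α) : ℕ :=
  (A.filter (fun a => a.2 = v)).card

/-- A linear vertex has indegree and outdegree equal to 1. -/
def LinearVertex {α : Type*} [DecidableEq α] (A : Finset (α × α)) (v : α) : Prop :=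
  indeg A v = 1 ∧ outdeg A v = 1

/-- The digraph is a directed `n`-cycle: its vertices can be listed
`v₁, …, vₙ` so that the arcs are exactly `(v₁,v₂), …, (vₙ,v₁)`. -/
def IsCycleDigraph {α : Type*} [DecidableEq α] (V : Finset α) (A : Finset (α × α)) : Prop :=
  ∃ l : List α, l.Nodup ∧ 2 ≤ l.length ∧ l.toFinset = V ∧ A = (l.zip (l.rotate 1)).toFinset

/-- A directed tree: every arc is accompanied by its reverse, and the
underlying undirected graph (on the vertex set `V`) is a tree. -/
def IsDirTree {α : Type*} [DecidableEq α] (V : Finset α) (A : Finset (α × α)) : Prop :=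
  (∀ u v : α, (u, v) ∈ A → (v, u) ∈ A) ∧
  (SimpleGraph.fromRel (fun a b : {x // x ∈ V} => ((a : α), (b : α)) ∈ A)).IsTree

/-- `(V', A')` is the (internal or external) expansion of `(V, A)` by the new
vertex `v`.  Internal: an arc `(u,w)` is replaced by `(u,v)` and `(v,w)`.
External: the arcs `(u,v)` and `(v,w)` are added for vertices `u, w ∈ V`. -/
def IsExpansionBy {α : Type*} [DecidableEq α] (v : α) (V : Finset α) (A : Finset (α × α))
    (V' : Finset α) (A' : Finset (α × α)) : Prop :=
  v ∉ V ∧ V' = insert v V ∧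
    ((∃ u w, (u, w) ∈ A ∧ A' = insert (u, v) (insert (v, w) (A.erase (u, w)))) ∨
     (∃ u ∈ V, ∃ w ∈ V, A' = insert (u, v) (insert (v, w) A)))

/-!
Every route through `v` enters along `(u, v)` and leaves along `(v, w)`, so replacing each
passage `u, v, w` by the given alternative `u`–`w` path turns walks of `D*` between vertices
other than `v` into walks of `D* − v`. Conversely, an arc `a` of `D* − v` whose removal left
`D* − v` strongly connected could also be removed from `D*`: the arcs `(u, v)` and `(v, w)`
attach `v` back to the rest.
-/

section

variable {α : Type*}

theorem Reach.mono {A B : Finset (α × α)} (hAB : A ⊆ B) {x y : α} (h : Reach A x y) :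
    Reach B x y :=
  Relation.ReflTransGen.mono (fun _ _ hab => hAB hab) _ _ h

theorem IsPath.reach {A : Finset (α × α)} {u w : α} {l : List α} (hl : IsPath A u w l) :
    Reach A u w := by
  obtain ⟨hchain, hhead, hlast, -⟩ := hl
  have hne : l ≠ [] := by rintro rfl; simp at hhead
  have hu : l.head hne = u := by simpa [List.head?_eq_some_head hne] using hhead
  have hw : l.getLast hne = w := by simpa [List.getLast?_eq_some_getLast hne] using hlast
  exact hu ▸ hw ▸ List.relationReflTransGen_of_exists_isChain l hchain hne

theorem IsPath.mono {A B : Finset (α × α)} {u w : α} {l : List α} (hl : IsPath A u w l)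
    (hAB : ∀ a ∈ l, ∀ b ∈ l, (a, b) ∈ A → (a, b) ∈ B) : IsPath B u w l :=
  ⟨hl.1.imp_of_mem_imp fun a b ha hb => hAB a ha b hb, hl.2⟩

theorem IsPath.eq_of_mem {A : Finset (α × α)} {u v w : α} {l : List α} (hl : IsPath A u w l)
    (hv : v ∈ l) (huv : u ≠ v) (hwv : w ≠ v)
    (hin : ∀ x, (x, v) ∈ A → x = u) (hout : ∀ x, (v, x) ∈ A → x = w) :
    l = [u, v, w] := by
  obtain ⟨hchain, hhead, hlast, hnodup⟩ := hl
  rw [List.Chain', List.isChain_iff_getElem] at hchain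
  obtain ⟨i, hi, rfl⟩ := List.getElem_of_mem hv
  have h0 : l[0] = u := by
    rw [List.head?_eq_getElem?, List.getElem?_eq_getElem (by omega)] at hhead
    exact Option.some.inj hhead
  have hend : l[l.length - 1] = w := by
    rw [List.getLast?_eq_getElem?, List.getElem?_eq_getElem (by omega)] at hlast
    exact Option.some.inj hlast
  obtain ⟨j, rfl⟩ : ∃ j, i = j + 1 :=
    Nat.exists_eq_succ_of_ne_zero (by rintro rfl; exact huv h0.symm)
  obtain rfl : j = 0 := hnodup.getElem_inj_iff.1 ((hin _ (hchain j hi)).trans h0.symm)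
  have h2 : 2 < l.length := by
    by_contra! hlen
    exact hwv (hend.symm.trans (by congr 1; omega))
  have hlen : l.length = 3 := by
    have := hnodup.getElem_inj_iff.1 ((hout _ (hchain 1 h2)).trans hend.symm)
    omega
  obtain ⟨a, b, c, rfl⟩ : ∃ a b c, l = [a, b, c] := by
    match l, hlen with
    | [a, b, c], _ => exact ⟨a, b, c, rfl⟩
  simp_all

def avoidingArcs [DecidableEq α] (A : Finset (α × α)) (v : α) : Finset (α × α) :=
  A.filter (fun a => a.1 ≠ v ∧ a.2 ≠ v)

theorem avoidingArcs_subset [DecidableEq α] (A : Finset (α × α)) (v : α) :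
    avoidingArcs A v ⊆ A :=
  Finset.filter_subset _ _

theorem mem_avoidingArcs [DecidableEq α] {A : Finset (α × α)} {v : α} {a : α × α} :
    a ∈ avoidingArcs A v ↔ a ∈ A ∧ a.1 ≠ v ∧ a.2 ≠ v :=
  Finset.mem_filter

theorem reach_avoidingArcs [DecidableEq α] {A : Finset (α × α)} {u v w x y : α}
    (hin : ∀ z, (z, v) ∈ A → z = u) (hout : ∀ z, (v, z) ∈ A → z = w)
    (hbypass : Reach (avoidingArcs A v) u w) (hx : x ≠ v) (hxy : Reach A x y) :
    Reach (avoidingArcs A v) x (if y = v then u else y) := by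
  induction hxy with
  | refl => exact if_neg hx ▸ .refl
  | @tail z z' _ hzz' ih =>
    by_cases hz' : z' = v
    · subst hz'
      obtain rfl := hin z hzz'
      simpa using ih
    rw [if_neg hz']
    by_cases hz : z = v
    · subst hz
      obtain rfl := hout z' hzz'
      exact (if_pos rfl ▸ ih).trans hbypass
    · exact (if_neg hz ▸ ih).tail (mem_avoidingArcs.2 ⟨hzz', hz, hz'⟩)

theorem StrongConn.erase_avoidingArcs [DecidableEq α] {V : Finset α} {A : Finset (α × α)}
    {u v w : α} (hA : StrongConn V A)
    (hin : ∀ z, (z, v) ∈ A → z = u) (hout : ∀ z, (v, z) ∈ A → z = w)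
    (hbypass : Reach (avoidingArcs A v) u w) :
    StrongConn (V.erase v) (avoidingArcs A v) := by
  intro x hx y hy
  rw [Finset.mem_erase] at hx hy
  simpa [hy.1] using reach_avoidingArcs hin hout hbypass hx.1 (hA x hx.2 y hy.2)

theorem StrongConn.insert_of_arcs [DecidableEq α] {W : Finset α} {B B' : Finset (α × α)}
    {u v w : α} (hW : StrongConn W B) (hBB' : B ⊆ B') (hu : u ∈ W) (hw : w ∈ W)
    (huv : (u, v) ∈ B') (hvw : (v, w) ∈ B') :
    StrongConn (insert v W) B' := by
  have to_w : ∀ x ∈ insert v W, Reach B' x w := by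
    intro x hx
    rcases Finset.mem_insert.1 hx with rfl | hx
    · exact Relation.ReflTransGen.single hvw
    · exact (hW x hx w hw).mono hBB'
  have from_w : ∀ y ∈ insert v W, Reach B' w y := by
    intro y hy
    rcases Finset.mem_insert.1 hy with rfl | hy
    · exact ((hW w hw u hu).mono hBB').tail huv
    · exact (hW w hw y hy).mono hBB'
  exact fun x hx y hy => (to_w x hx).trans (from_w y hy)

end

theorem stmt_15_general {α : Type*} [DecidableEq α] (V : Finset α) (A : Finset (α × α))
    (hg : GoodDigraph V A) (h : MSC V A) (v u w : α)
    (huv : (u, v) ∈ A) (hvw : (v, w) ∈ A)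
    (hin : ∀ x, (x, v) ∈ A → x = u) (hout : ∀ x, (v, x) ∈ A → x = w)
    (hpath : ∃ l, IsPath A u w l ∧ l ≠ [u, v, w]) :
    MSC (V.erase v) (A.filter (fun a => a.1 ≠ v ∧ a.2 ≠ v)) := by
  obtain ⟨huV, hvV, hu_ne⟩ := hg.2 _ huv
  obtain ⟨-, hwV, hv_ne⟩ := hg.2 _ hvw
  obtain ⟨l, hl, hl_ne⟩ := hpath
  have hvl : v ∉ l := fun hv => hl_ne (hl.eq_of_mem hv hu_ne (Ne.symm hv_ne) hin hout)
  have hbypass : Reach (avoidingArcs A v) u w := (hl.mono fun a ha b hb hab =>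
    mem_avoidingArcs.2 ⟨hab, ne_of_mem_of_not_mem ha hvl, ne_of_mem_of_not_mem hb hvl⟩).reach
  refine ⟨h.1.erase_avoidingArcs hin hout hbypass, fun a ha hconn =>
    h.2 a (avoidingArcs_subset A v ha) ?_⟩
  obtain ⟨-, ha₁, ha₂⟩ := mem_avoidingArcs.1 ha
  rw [← Finset.insert_erase hvV]
  exact hconn.insert_of_arcs (Finset.erase_subset_erase a (avoidingArcs_subset A v))
    (Finset.mem_erase.2 ⟨hu_ne, huV⟩) (Finset.mem_erase.2 ⟨Ne.symm hv_ne, hwV⟩)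
    (Finset.mem_erase.2 ⟨fun e => ha₂ (e ▸ rfl), huv⟩)
    (Finset.mem_erase.2 ⟨fun e => ha₁ (e ▸ rfl), hvw⟩)

/-- if `v` is a linear vertex of an MSC digraph with unique
in-neighbor `u` and unique out-neighbor `w`, `u ≠ w`, and there is a directed
path from `u` to `w` distinct from `u, v, w`, then deleting `v` and its
incident arcs yields an MSC digraph. -/
theorem stmt_15 {α : Type*} [DecidableEq α] (V : Finset α) (A : Finset (α × α))
    (hg : GoodDigraph V A) (h : MSC V A) (v u w : α)
    (huv : (u, v) ∈ A) (hvw : (v, w) ∈ A)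
    (hin : ∀ x, (x, v) ∈ A → x = u) (hout : ∀ x, (v, x) ∈ A → x = w)
    (huw : u ≠ w)
    (hpath : ∃ l, IsPath A u w l ∧ l ≠ [u, v, w]) :
    MSC (V.erase v) (A.filter (fun a => a.1 ≠ v ∧ a.2 ≠ v)) :=
  stmt_15_general V A hg h v u w huv hvw hin hout hpath
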